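/- arXiv:2008.04167 — 3 statements merged into one kernel-verified Lean document; each statement's English description precedes it below -/
import Mathlib

section
/- In single-shot HotStuff, if two well-formed prepared certificates exist for the same view v and values x, x' (i.e., quorums of processes sent PREPARED(v, hash(x)) and PREPARED(v, hash(x')) respectively), then x = x'. -/
/-- If two quorums sent `PREPARED(v, hash x)` and `PREPARED(v, hash x')` respectively, and
each correct process sends at most one `PREPARED` message per view, then `x = x'`. -/
theorem prepared_unique_per_view {Value : Type*} (f : ℕ)
    (B : Finset (Fin (3 * f + 1))) (hB : B.card ≤ f)
    (sentPrepared : Fin (3 * f + 1) → ℕ → Value → Prop)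
    (h_once : ∀ p, p ∉ B → ∀ v x x', sentPrepared p v x → sentPrepared p v x' → x = x')
    (v : ℕ) (x x' : Value) (Q Q' : Finset (Fin (3 * f + 1)))
    (hQ : Q.card = 2 * f + 1) (hQ' : Q'.card = 2 * f + 1)
    (hx : ∀ p ∈ Q, sentPrepared p v x) (hx' : ∀ p ∈ Q', sentPrepared p v x') :
    x = x' := by
  have hcard : f + 1 ≤ (Q ∩ Q').card := by
    have h1 : (Q ∪ Q').card ≤ 3 * f + 1 := by
      simpa using (Q ∪ Q').card_le_univ.trans_eq (by simp)
    have h2 := Finset.card_union_add_card_inter Q Q'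
    omega
  have hsub : ¬ (Q ∩ Q' ⊆ B) := by
    intro h
    have := Finset.card_le_card h
    omega
  obtain ⟨p, hp, hpB⟩ := Finset.not_subset.mp hsub
  exact h_once p hpB v x x' (hx p (Finset.mem_inter.mp hp).1) (hx' p (Finset.mem_inter.mp hp).2)
end

section
/- In the SBFT leader recovery rule, suppose all 3f+1 processes sent PREPARED(v, hash(x)) (fast commit of x in view v), and the leader of view v' > v collects NEWLEADER messages from a quorum Q of processes, where each correct process in Q reports a pre_view ≥ v and reports cur_val = x whenever its pre_view ≥ v (by induction). Then the set D of pairs (y, w) such that some f+1 processes in Q all report cur_val = y with minimum reported pre_view w contains only pairs with y = x among those with w ≥ v, D is nonempty, and the selected fast value x_fast equals x with v_fast ≥ v. -/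
/-- SBFT leader recovery: if every correct process in the quorum `Q` reports
`pre_view ≥ v` and `cur_val = x`, then every pair `(y, w) ∈ D` with `w ≥ v` has `y = x`,
`D` is nonempty, the selected fast view `v_fast = max {w | (y, w) ∈ D}` satisfies
`v_fast ≥ v`, and any value paired with `v_fast` in `D` equals `x` (so `x_fast = x`). -/
theorem sbft_leader_recovery {Value : Type*} (f : ℕ)
    (B : Finset (Fin (3 * f + 1))) (hB : B.card ≤ f)
    (Q : Finset (Fin (3 * f + 1))) (hQ : Q.card = 2 * f + 1)
    (preview : Fin (3 * f + 1) → ℕ) (curval : Fin (3 * f + 1) → Value)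
    (v : ℕ) (x : Value)
    (hreport : ∀ p ∈ Q, p ∉ B → v ≤ preview p ∧ curval p = x) :
    ∀ D : Set (Value × ℕ),
      D = {yw : Value × ℕ | ∃ P : Finset (Fin (3 * f + 1)), P ⊆ Q ∧
            ∃ hP : P.Nonempty, P.card = f + 1 ∧ (∀ j ∈ P, curval j = yw.1) ∧
              yw.2 = P.inf' hP preview} →
      (∀ y w, (y, w) ∈ D → v ≤ w → y = x) ∧
      D.Nonempty ∧
      v ≤ sSup {w : ℕ | ∃ y, (y, w) ∈ D} ∧
      (∀ y, (y, sSup {w : ℕ | ∃ y', (y', w) ∈ D}) ∈ D → y = x) := by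
  intro D hD
  -- any (f+1)-subset of Q contains a correct process
  have hcorrect : ∀ P : Finset (Fin (3 * f + 1)), P ⊆ Q → P.card = f + 1 →
      ∃ j ∈ P, j ∉ B := by
    intro P hPQ hPc
    by_contra h
    push_neg at h
    have hsub : P ⊆ B := fun j hj => h j hj
    have := Finset.card_le_card hsub
    omega
  -- claim 1: any pair in D has value x
  have claim1 : ∀ y w, (y, w) ∈ D → y = x := by
    intro y w hyw
    rw [hD] at hyw
    obtain ⟨P, hPQ, hP, hPc, hval, hw⟩ := hyw
    obtain ⟨j, hjP, hjB⟩ := hcorrect P hPQ hPc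
    have hx := (hreport j (hPQ hjP) hjB).2
    have hy := hval j hjP
    exact hy.symm.trans hx
  -- a witness P of correct processes
  have hQB : f + 1 ≤ (Q \ B).card := by
    have h1 : Q.card - B.card ≤ (Q \ B).card := Finset.le_card_sdiff B Q
    omega
  obtain ⟨P, hPsub, hPc⟩ := Finset.exists_subset_card_eq hQB
  have hPne : P.Nonempty := Finset.card_pos.mp (by omega)
  have hPQ : P ⊆ Q := hPsub.trans (Finset.sdiff_subset)
  have hPcorr : ∀ j ∈ P, j ∉ B := fun j hj => (Finset.mem_sdiff.mp (hPsub hj)).2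
  have hmem : (x, P.inf' hPne preview) ∈ D := by
    rw [hD]
    exact ⟨P, hPQ, hPne, hPc, fun j hj => (hreport j (hPQ hj) (hPcorr j hj)).2, rfl⟩
  have hvw : v ≤ P.inf' hPne preview :=
    Finset.le_inf' hPne _ (fun j hj => (hreport j (hPQ hj) (hPcorr j hj)).1)
  -- boundedness of the view set
  have hBdd : BddAbove {w : ℕ | ∃ y, (y, w) ∈ D} := by
    refine ⟨Finset.univ.sup preview, ?_⟩
    rintro w ⟨y, hyw⟩
    rw [hD] at hyw
    obtain ⟨P', hP'Q, hP', hP'c, hval', hw'⟩ := hyw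
    obtain ⟨j, hj⟩ := id hP'
    calc w = P'.inf' hP' preview := hw'
      _ ≤ preview j := Finset.inf'_le _ hj
      _ ≤ Finset.univ.sup preview := Finset.le_sup (Finset.mem_univ j)
  refine ⟨fun y w hyw _ => claim1 y w hyw, ⟨_, hmem⟩, ?_, ?_⟩
  · exact le_trans hvw (le_csSup hBdd ⟨x, hmem⟩)
  · intro y hy
    exact claim1 y _ hy
end

section
/- Suppose for all views v ≥ V: E(v+1) ≥ E(v) + F(v) (no process advances early) and L(v) ≤ E(v) + 2δ, with F nondecreasing. If F(v) > 2δ for all v ≥ V, then the views entered by any two correct processes always differ by at most 1 at any time t ≥ L(V); i.e., if process i is in view v_i(t) and process j in v_j(t), both ≥ V, then |v_i(t) − v_j(t)| ≤ 1. -/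
/-- If `E (v+1) ≥ E v + F v` with `F v > 2δ` and `L v ≤ E v + 2δ` for all `v ≥ V`, then at
any time `t ≥ L V` the local views of any two correct processes (both `≥ V`) differ by at
most `1`. -/
theorem local_views_differ_by_at_most_one {I : Type*}
    (E L F : ℕ → ℝ) (δ : ℝ) (V : ℕ) (hδ : 0 < δ)
    (hFmono : Monotone F) (hF : ∀ v, V ≤ v → 2 * δ < F v)
    (hstep : ∀ v, V ≤ v → E v + F v ≤ E (v + 1))
    (hspread : ∀ v, V ≤ v → L v ≤ E v + 2 * δ)
    (correct : I → Prop) (localView : I → ℝ → ℕ)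
    (hin : ∀ i t, correct i → V ≤ localView i t →
      E (localView i t) ≤ t ∧ t < L (localView i t + 1)) :
    ∀ i j t, correct i → correct j → L V ≤ t →
      V ≤ localView i t → V ≤ localView j t →
      localView i t ≤ localView j t + 1 ∧ localView j t ≤ localView i t + 1 := by
  have Emono : ∀ a b, V ≤ a → a ≤ b → E a ≤ E b := by
    intro a b hVa hab
    induction b with
    | zero => simp [Nat.le_zero.mp hab]
    | succ n ih =>
      rcases Nat.lt_or_ge a (n+1) with h | h
      · have han : a ≤ n := Nat.lt_succ_iff.mp h
        have : E a ≤ E n := ih han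
        have hVn : V ≤ n := le_trans hVa han
        have := hstep n hVn
        have hFn := hF n hVn
        nlinarith
      · have : a = n + 1 := le_antisymm hab h
        simp [this]
  have key : ∀ i j t, correct i → correct j →
      V ≤ localView i t → V ≤ localView j t →
      localView i t ≤ localView j t + 1 := by
    intro i j t hi hj hVi hVj
    by_contra hcon
    push_neg at hcon
    have h2 : localView j t + 2 ≤ localView i t := by omega
    obtain ⟨hEi, _⟩ := hin i t hi hVi
    obtain ⟨_, htL⟩ := hin j t hj hVj
    set vj := localView j t
    have hVj1 : V ≤ vj + 1 := by omega
    have h1 : t < E (vj + 1) + 2 * δ := lt_of_lt_of_le htL (hspread (vj+1) hVj1)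
    have h2' : E (vj+1) + F (vj+1) ≤ E (vj + 2) := hstep (vj+1) hVj1
    have h3 : E (vj + 2) ≤ E (localView i t) := Emono _ _ (by omega) h2
    have hFj := hF (vj+1) hVj1
    linarith
  intro i j t hi hj _ hVi hVj
  exact ⟨key i j t hi hj hVi hVj, key j i t hj hi hVj hVi⟩
end
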